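/- Maximal leakage upper-bounds Shannon mutual information: for finite random variables X, Z with X having full support, I(X;Z) ≤ L(X → Z), where L(X → Z) = log(∑_z max_x P_{Z|X}(z|x)). -/

import Mathlib

open scoped BigOperators
noncomputable section

/-- A joint pmf on a pair of finite alphabets. -/
def IsJointPMF2 {X Z : Type} [Fintype X] [Fintype Z] (p : X → Z → ℝ) : Prop :=
  (∀ x z, 0 ≤ p x z) ∧ ∑ x, ∑ z, p x z = 1

/-- Shannon mutual information I(X;Z) in bits (with the convention 0·log(·) = 0,
realised by Lean's junk values p/0 = 0 and logb 2 0 = 0). -/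
def mutInfo {X Z : Type} [Fintype X] [Fintype Z] (p : X → Z → ℝ) : ℝ :=
  ∑ x, ∑ z, p x z * Real.logb 2 (p x z / ((∑ z', p x z') * (∑ x', p x' z)))

/-- Closed form of maximal leakage: L(X → Z) = log₂(∑_z max_x P_{Z|X}(z|x)). -/
def maxLeak {X Z : Type} [Fintype X] [Fintype Z] [Nonempty X] (p : X → Z → ℝ) : ℝ :=
  Real.logb 2 (∑ z, Finset.univ.sup' Finset.univ_nonempty fun x => p x z / ∑ z', p x z')

/-- maximal leakage upper-bounds Shannon mutual information:
for X with full support, I(X;Z) ≤ L(X → Z). -/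
theorem mutual_information_le_maximal_leakage
    {X Z : Type} [Fintype X] [Fintype Z] [Nonempty X] [Nonempty Z]
    (p : X → Z → ℝ) (hp : IsJointPMF2 p)
    (hsupp : ∀ x, 0 < ∑ z, p x z) :
    mutInfo p ≤ maxLeak p := by
  obtain ⟨hnn, hsum⟩ := hp
  set pX : X → ℝ := fun x => ∑ z, p x z with hpX
  set pZ : Z → ℝ := fun z => ∑ x, p x z with hpZdef
  set m : Z → ℝ := fun z => Finset.univ.sup' Finset.univ_nonempty (fun x => p x z / pX x)
    with hmdef
  set S : ℝ := ∑ z, m z with hSdef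
  have hlog2 : (0:ℝ) < Real.log 2 := Real.log_pos (by norm_num)
  have hmnn : ∀ z, 0 ≤ m z := by
    intro z
    obtain ⟨x0⟩ := ‹Nonempty X›
    exact le_trans (div_nonneg (hnn x0 z) (hsupp x0).le)
      (Finset.le_sup' (fun x => p x z / pX x) (Finset.mem_univ x0))
  have hple : ∀ x z, p x z ≤ pZ z := fun x z =>
    Finset.single_le_sum (fun x' _ => hnn x' z) (Finset.mem_univ x)
  have hS1 : 1 ≤ S := by
    obtain ⟨x0⟩ := ‹Nonempty X›
    calc (1:ℝ) = ∑ z, p x0 z / pX x0 := by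
          rw [← Finset.sum_div, div_self (hsupp x0).ne']
      _ ≤ S := Finset.sum_le_sum fun z _ =>
          Finset.le_sup' (fun x => p x z / pX x) (Finset.mem_univ x0)
  have hS0 : 0 < S := lt_of_lt_of_le one_pos hS1
  have key : ∀ x z, p x z * Real.logb 2 (p x z / (pX x * pZ z))
      ≤ p x z * Real.logb 2 S + (m z / S * (p x z / pZ z) - p x z) / Real.log 2 := by
    intro x z
    rcases eq_or_lt_of_le (hnn x z) with h0 | h0
    · simp [← h0]
    · have hpZ0 : 0 < pZ z := lt_of_lt_of_le h0 (hple x z)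
      have hpX0 : 0 < pX x := hsupp x
      have ha : 0 < p x z / (pX x * pZ z) := div_pos h0 (by positivity)
      have ht : 0 < p x z / (pX x * pZ z) / S := div_pos ha hS0
      have hlog := Real.log_le_sub_one_of_pos ht
      have hdiff : Real.logb 2 (p x z / (pX x * pZ z)) - Real.logb 2 S
          = Real.log (p x z / (pX x * pZ z) / S) / Real.log 2 := by
        rw [Real.log_div ha.ne' hS0.ne']
        simp [Real.logb, sub_div]
      have hmz : p x z / pX x ≤ m z :=
        Finset.le_sup' (fun x' => p x' z / pX x') (Finset.mem_univ x)
      have hstep : p x z * (p x z / (pX x * pZ z) / S) ≤ m z / S * (p x z / pZ z) := by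
        have e : p x z * (p x z / (pX x * pZ z) / S) = (p x z / pX x) * (p x z / pZ z / S) := by
          field_simp
        rw [e]
        have h2 : (p x z / pX x) * (p x z / pZ z / S) ≤ m z * (p x z / pZ z / S) :=
          mul_le_mul_of_nonneg_right hmz (by positivity)
        refine h2.trans_eq ?_
        ring
      have : p x z * Real.logb 2 (p x z / (pX x * pZ z)) - p x z * Real.logb 2 S
          ≤ (m z / S * (p x z / pZ z) - p x z) / Real.log 2 := by
        rw [← mul_sub, hdiff, ← mul_div_assoc]
        rw [div_le_div_iff₀ hlog2 hlog2]
        rw [mul_comm _ (Real.log 2), mul_comm _ (Real.log 2)]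
        apply mul_le_mul_of_nonneg_left _ hlog2.le
        calc p x z * Real.log (p x z / (pX x * pZ z) / S)
            ≤ p x z * (p x z / (pX x * pZ z) / S - 1) :=
              mul_le_mul_of_nonneg_left hlog h0.le
          _ = p x z * (p x z / (pX x * pZ z) / S) - p x z := by ring
          _ ≤ m z / S * (p x z / pZ z) - p x z := by linarith [hstep]
      linarith [this]
  have hsum2 : ∀ z, ∑ x, p x z / pZ z = pZ z / pZ z := fun z => (Finset.sum_div _ _ _).symm
  have main : mutInfo p ≤ Real.logb 2 S := by
    calc mutInfo p
        ≤ ∑ x, ∑ z, (p x z * Real.logb 2 S + (m z / S * (p x z / pZ z) - p x z) / Real.log 2) :=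
          Finset.sum_le_sum fun x _ => Finset.sum_le_sum fun z _ => key x z
      _ = Real.logb 2 S + ((∑ z, m z / S * (pZ z / pZ z)) - 1) / Real.log 2 := by
          have hsum' : ∑ x, ∑ z, p x z = 1 := hsum
          have e1 : ∑ x, ∑ z, p x z * Real.logb 2 S = Real.logb 2 S := by
            simp only [← Finset.sum_mul]
            rw [hsum', one_mul]
          have einner : ∀ z, ∑ x, (m z / S * (p x z / pZ z) - p x z)
              = m z / S * (pZ z / pZ z) - pZ z := by
            intro z
            rw [Finset.sum_sub_distrib, ← Finset.mul_sum, hsum2 z]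
          have hZ1 : ∑ z, pZ z = 1 := by
            rw [show (∑ z, pZ z) = ∑ z, ∑ x, p x z from rfl, ← Finset.sum_comm, hsum']
          have e2 : ∑ x, ∑ z, (m z / S * (p x z / pZ z) - p x z) / Real.log 2
              = ((∑ z, m z / S * (pZ z / pZ z)) - 1) / Real.log 2 := by
            simp only [← Finset.sum_div]
            congr 1
            rw [Finset.sum_comm]
            simp only [einner]
            rw [Finset.sum_sub_distrib, hZ1]
          simp only [Finset.sum_add_distrib]
          rw [e1, e2]
      _ ≤ Real.logb 2 S := by
          have h1 : ∑ z, m z / S * (pZ z / pZ z) ≤ ∑ z, m z / S := by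
            apply Finset.sum_le_sum
            intro z _
            have : pZ z / pZ z ≤ 1 := div_self_le_one _
            calc m z / S * (pZ z / pZ z) ≤ m z / S * 1 :=
                  mul_le_mul_of_nonneg_left this (div_nonneg (hmnn z) hS0.le)
              _ = m z / S := mul_one _
          have h2 : ∑ z, m z / S = 1 := by
            rw [← Finset.sum_div, ← hSdef, div_self hS0.ne']
          have : ((∑ z, m z / S * (pZ z / pZ z)) - 1) / Real.log 2 ≤ 0 := by
            apply div_nonpos_of_nonpos_of_nonneg _ hlog2.le
            linarith [h1, h2.le]
          linarith
  have hml : maxLeak p = Real.logb 2 S := rfl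
  rw [hml]
  exact main
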